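/- arXiv:2308.06717 — 2 statements merged into one kernel-verified Lean document; each statement's English description precedes it below -/
import Mathlib

section
/- Fix s ∈ [R_min − R_max, R_max − R_min]^n and a sequence of chosen arms v_τ ∈ {1,...,n} for τ = 1,...,t−1, where v_τ depends only on π_τ. Define L(s, Π) = ∑_{τ=1}^{t−1} ℓ(s, v_τ(π_τ), π_τ) where ℓ(s, v, π) = max_a (s_a + π_a − s_v − π_v) and each π_τ ∈ [R_min, R_max + γ]^n. If Π and Π' differ only in a single coordinate π_{τ̃,p} of a single time step τ̃, then |L(s, Π) − L(s, Π')| ≤ 6(R_max − R_min) + 2γ. -/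
lemma loss_bounds (n : ℕ) (hn : 1 ≤ n) (Rmin Rmax γ : ℝ)
    (s : Fin n → ℝ) (hs : ∀ a, s a ∈ Set.Icc (Rmin - Rmax) (Rmax - Rmin))
    (π : Fin n → ℝ) (hπ : ∀ a, π a ∈ Set.Icc Rmin (Rmax + γ)) (w : Fin n) :
    0 ≤ (⨆ a, (s a + π a)) - s w - π w ∧
      (⨆ a, (s a + π a)) - s w - π w ≤ 3 * (Rmax - Rmin) + γ := by
  have : Nonempty (Fin n) := ⟨⟨0, hn⟩⟩
  have hbdd : BddAbove (Set.range fun a => s a + π a) := Set.Finite.bddAbove (Set.finite_range _)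
  have hle : s w + π w ≤ ⨆ a, (s a + π a) := le_ciSup hbdd w
  have hsup : (⨆ a, (s a + π a)) ≤ (Rmax - Rmin) + (Rmax + γ) := by
    apply ciSup_le
    intro a
    have := (hs a).2; have := (hπ a).2
    linarith
  have h1 := (hs w).1
  have h2 := (hπ w).1
  constructor <;> linarith

/-- Bounded-differences property of the cumulative loss
`L(s, Π) = ∑_τ ℓ(s, v_τ(π_τ), π_τ)`, `ℓ(s, v, π) = max_a (s_a + π_a) − s_v − π_v`:
changing a single coordinate of a single incentive vector changes `L` by at most
`6(R_max − R_min) + 2γ`. -/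
theorem cumulative_loss_bounded_differences (n T : ℕ) (hn : 1 ≤ n)
    (Rmin Rmax γ : ℝ) (hR : Rmin < Rmax) (hγ : 0 < γ)
    (s : Fin n → ℝ) (hs : ∀ a, s a ∈ Set.Icc (Rmin - Rmax) (Rmax - Rmin))
    (v : Fin T → (Fin n → ℝ) → Fin n)
    (P P' : Fin T → Fin n → ℝ)
    (hP : ∀ τ a, P τ a ∈ Set.Icc Rmin (Rmax + γ))
    (hP' : ∀ τ a, P' τ a ∈ Set.Icc Rmin (Rmax + γ))
    (τ₀ : Fin T) (p : Fin n)
    (hdiff : ∀ τ a, ¬(τ = τ₀ ∧ a = p) → P τ a = P' τ a) :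
    |(∑ τ, ((⨆ a, (s a + P τ a)) - s (v τ (P τ)) - P τ (v τ (P τ)))) -
        (∑ τ, ((⨆ a, (s a + P' τ a)) - s (v τ (P' τ)) - P' τ (v τ (P' τ))))|
      ≤ 6 * (Rmax - Rmin) + 2 * γ := by
  set f : Fin T → ℝ := fun τ => (⨆ a, (s a + P τ a)) - s (v τ (P τ)) - P τ (v τ (P τ)) with hf
  set g : Fin T → ℝ := fun τ => (⨆ a, (s a + P' τ a)) - s (v τ (P' τ)) - P' τ (v τ (P' τ)) with hg
  have heq : ∀ τ ≠ τ₀, f τ = g τ := by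
    intro τ hτ
    have hPeq : P τ = P' τ := by
      funext a
      exact hdiff τ a (fun h => hτ h.1)
    simp [hf, hg, hPeq]
  have hsum : (∑ τ, f τ) - (∑ τ, g τ) = f τ₀ - g τ₀ := by
    rw [← Finset.sum_sub_distrib]
    rw [Finset.sum_eq_single τ₀]
    · intro b _ hb; rw [heq b hb]; ring
    · intro h; exact absurd (Finset.mem_univ τ₀) h
  rw [hsum]
  obtain ⟨h1, h2⟩ := loss_bounds n hn Rmin Rmax γ s hs (P τ₀) (hP τ₀) (v τ₀ (P τ₀))
  obtain ⟨h3, h4⟩ := loss_bounds n hn Rmin Rmax γ s hs (P' τ₀) (hP' τ₀) (v τ₀ (P' τ₀))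
  rw [abs_sub_le_iff]
  constructor <;> simp only [hf, hg] at * <;> linarith
end

section
/- Let n ≥ 2 be an integer, L > 0, and γ with 0 < γ ≤ L. Let s⁰ ∈ [−(L−γ), L−γ]^n and let π₁,...,π_n be i.i.d. uniform on an interval of length L. Fix an index a. Then P(a = argmax_{a'} (s⁰_{a'} + π_{a'})) ≥ (s⁰_a + γ)^{2n−2} / (2^{n−1} L^{2n−2}), provided s⁰_a + γ > 0. -/
open MeasureTheory

/-- The uniform probability measure on the interval `[c, c + L]` (of length `L`). -/
noncomputable def uniformLen (c L : ℝ) : Measure ℝ :=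
  (ENNReal.ofReal L)⁻¹ • (volume.restrict (Set.Icc c (c + L)))

lemma uniformLen_isProb (c L : ℝ) (hL : 0 < L) : IsProbabilityMeasure (uniformLen c L) := by
  constructor
  rw [uniformLen, Measure.smul_apply, Measure.restrict_apply MeasurableSet.univ,
    Set.univ_inter, Real.volume_Icc, smul_eq_mul]
  rw [show c + L - c = L by ring]
  exact ENNReal.inv_mul_cancel (ENNReal.ofReal_pos.mpr hL).ne' ENNReal.ofReal_ne_top

lemma uniformLen_Iio (c L t : ℝ) (h1 : c ≤ t) (h2 : t ≤ c + L) :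
    uniformLen c L (Set.Iio t) = (ENNReal.ofReal L)⁻¹ * ENNReal.ofReal (t - c) := by
  rw [uniformLen, Measure.smul_apply, Measure.restrict_apply measurableSet_Iio, smul_eq_mul]
  congr 1
  rw [show Set.Iio t ∩ Set.Icc c (c + L) = Set.Ico c t by
    ext y
    simp only [Set.mem_inter_iff, Set.mem_Iio, Set.mem_Icc, Set.mem_Ico]
    constructor
    · rintro ⟨h, h', _⟩; exact ⟨h', h⟩
    · rintro ⟨h, h'⟩; exact ⟨h', h, by linarith⟩]
  exact Real.volume_Ico

/-- Lower bound on the probability that arm `a` is the (unique) true utility maximizer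
under i.i.d. uniform exploration incentives on an interval of length `L`:
`P(a = argmax_{a'} (s⁰_{a'} + π_{a'})) ≥ (s⁰_a + γ)^{2n−2}/(2^{n−1} L^{2n−2})`,
provided `s⁰ ∈ [−(L−γ), L−γ]^n` and `s⁰_a + γ > 0`. -/
theorem prob_arm_is_maximizer_lower_bound (n : ℕ) (hn : 2 ≤ n) (L γ c : ℝ)
    (hL : 0 < L) (hγ0 : 0 < γ) (hγL : γ ≤ L)
    (s0 : Fin n → ℝ) (hs0 : ∀ a', s0 a' ∈ Set.Icc (-(L - γ)) (L - γ))
    (a : Fin n) (hpos : 0 < s0 a + γ) :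
    ENNReal.ofReal ((s0 a + γ) ^ (2 * n - 2) / (2 ^ (n - 1) * L ^ (2 * n - 2)))
      ≤ (Measure.pi fun _ : Fin n => uniformLen c L)
          {π | ∀ a', a' ≠ a → s0 a' + π a' < s0 a + π a} := by
  obtain ⟨k, rfl⟩ : ∃ k, n = k + 1 := ⟨n - 1, by omega⟩
  have hk : 1 ≤ k := by omega
  haveI : IsProbabilityMeasure (uniformLen c L) := uniformLen_isProb c L hL
  set μ := uniformLen c L with hμ
  set m := s0 a + γ with hm
  have hmL : m ≤ L := by have := (hs0 a).2; simp only [hm]; linarith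
  set d := L - m with hd
  have hd0 : 0 ≤ d := by linarith
  -- Step 1: the event contains T
  set T : Set (Fin (k + 1) → ℝ) := {π | ∀ a', a' ≠ a → π a' < π a - d} with hT
  have hsub : T ⊆ {π | ∀ a', a' ≠ a → s0 a' + π a' < s0 a + π a} := by
    intro π hπ a' ha'
    have h1 := hπ a' ha'
    have h2 := (hs0 a').2
    simp only [hm, hd] at *
    linarith
  refine le_trans ?_ (measure_mono hsub)
  -- Step 2: compute the measure of T via piFinSuccAbove
  set S : Set (ℝ × (Fin k → ℝ)) := {p | ∀ j, p.2 j < p.1 - d} with hS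
  have hSmeas : MeasurableSet S := by
    have : S = ⋂ j, {p : ℝ × (Fin k → ℝ) | p.2 j < p.1 - d} := by
      ext p; simp [hS]
    rw [this]
    refine MeasurableSet.iInter fun j => ?_
    exact measurableSet_lt (by fun_prop) (by fun_prop)
  have hpre : (MeasurableEquiv.piFinSuccAbove (fun _ : Fin (k + 1) => ℝ) a) ⁻¹' S = T := by
    ext π
    simp only [Set.mem_preimage, MeasurableEquiv.piFinSuccAbove_apply, hS, Set.mem_setOf_eq,
      hT]
    constructor
    · intro h a' ha'
      obtain ⟨j, rfl⟩ := Fin.exists_succAbove_eq ha'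
      exact h j
    · intro h j
      exact h _ (Fin.succAbove_ne a j)
  have hTmeas : (Measure.pi fun _ : Fin (k + 1) => μ) T
      = (μ.prod (Measure.pi fun _ : Fin k => μ)) S := by
    rw [← hpre]
    exact (measurePreserving_piFinSuccAbove (fun _ : Fin (k + 1) => μ) a).measure_preimage
      hSmeas.nullMeasurableSet
  rw [hTmeas, Measure.prod_apply hSmeas]
  -- sections
  have hsec : ∀ x : ℝ, (Prod.mk x ⁻¹' S) = Set.pi Set.univ (fun _ : Fin k => Set.Iio (x - d)) := by
    intro x; ext y; simp [hS, Set.mem_pi]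
  have hsecval : ∀ x : ℝ, (Measure.pi fun _ : Fin k => μ) (Prod.mk x ⁻¹' S)
      = μ (Set.Iio (x - d)) ^ k := by
    intro x
    rw [hsec x, Measure.pi_pi]
    simp
  simp_rw [hsecval]
  -- lower bound the lintegral by restricting to [c+d, c+L]
  rw [hμ, uniformLen, lintegral_smul_measure]
  have hrestr : ∫⁻ x in Set.Icc (c + d) (c + L), (μ (Set.Iio (x - d))) ^ k
      ≤ ∫⁻ x in Set.Icc c (c + L), (μ (Set.Iio (x - d))) ^ k :=
    lintegral_mono_set (Set.Icc_subset_Icc_left (by linarith))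
  refine le_trans ?_ (mul_le_mul_right hrestr _)
  -- on [c+d, c+L] compute the integrand
  have hcongr : ∫⁻ x in Set.Icc (c + d) (c + L), (μ (Set.Iio (x - d))) ^ k
      = ∫⁻ x in Set.Icc (c + d) (c + L),
          ((ENNReal.ofReal L)⁻¹ ^ k * ENNReal.ofReal ((x - (c + d)) ^ k)) := by
    refine setLIntegral_congr_fun measurableSet_Icc (fun x hx => ?_)
    obtain ⟨hx1, hx2⟩ := hx
    rw [hμ, uniformLen_Iio c L (x - d) (by linarith) (by linarith), mul_pow,
      ← ENNReal.ofReal_pow (by linarith)]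
    ring_nf
  rw [hcongr, lintegral_const_mul' _ _ (ENNReal.pow_ne_top (ENNReal.inv_ne_top.mpr (ENNReal.ofReal_pos.mpr hL).ne'))]
  -- compute the remaining lintegral
  have hint : ∫⁻ x in Set.Icc (c + d) (c + L), ENNReal.ofReal ((x - (c + d)) ^ k)
      = ENNReal.ofReal (m ^ (k + 1) / (k + 1)) := by
    rw [← ofReal_integral_eq_lintegral_ofReal]
    · congr 1
      rw [MeasureTheory.integral_Icc_eq_integral_Ioc,
        ← intervalIntegral.integral_of_le (by linarith)]
      rw [intervalIntegral.integral_comp_sub_right (fun x => x ^ k) (c + d)]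
      simp only [sub_self]
      rw [show c + L - (c + d) = m by rw [hd]; ring]
      rw [integral_pow]
      simp
    · exact Continuous.integrableOn_Icc (by fun_prop)
    · filter_upwards [ae_restrict_mem measurableSet_Icc] with x hx
      exact pow_nonneg (by linarith [hx.1]) k
  rw [hint]
  -- now everything is explicit; convert to ofReal and finish with real arithmetic
  have hLinv : (ENNReal.ofReal L)⁻¹ = ENNReal.ofReal L⁻¹ :=
    (ENNReal.ofReal_inv_of_pos hL).symm
  rw [hLinv, ← ENNReal.ofReal_pow (by positivity), ← ENNReal.ofReal_mul (by positivity),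
    ← ENNReal.ofReal_mul (by positivity)]
  obtain ⟨p, rfl⟩ : ∃ p, k = p + 1 := ⟨k - 1, by omega⟩
  apply ENNReal.ofReal_le_ofReal
  have hm0 : 0 < m := hpos
  have hL0 : L ≠ 0 := hL.ne'
  have e1 : 2 * (p + 1 + 1) - 2 = 2 * p + 2 := by omega
  have e2 : (p + 1 + 1) - 1 = p + 1 := by omega
  rw [e1, e2]
  have h1 : ((p : ℝ) + 2) ≤ 2 ^ (p + 1) := by
    exact_mod_cast Nat.succ_le_of_lt (Nat.lt_two_pow_self (n := p + 1))
  have h2 : m ^ p ≤ L ^ p := pow_le_pow_left₀ hm0.le hmL _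
  have hreal : m ^ (2 * p + 2) / (2 ^ (p + 1) * L ^ (2 * p + 2))
      ≤ m ^ (p + 2) / (((p : ℝ) + 2) * L ^ (p + 2)) := by
    rw [div_le_div_iff₀ (by positivity) (by positivity)]
    calc m ^ (2 * p + 2) * (((p : ℝ) + 2) * L ^ (p + 2))
        = (m ^ (p + 2) * L ^ (p + 2)) * (((p : ℝ) + 2) * m ^ p) := by
          rw [show 2 * p + 2 = (p + 2) + p by ring, pow_add]; ring
      _ ≤ (m ^ (p + 2) * L ^ (p + 2)) * ((2 : ℝ) ^ (p + 1) * L ^ p) := by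
          refine mul_le_mul_of_nonneg_left ?_ (by positivity)
          exact mul_le_mul h1 h2 (by positivity) (by positivity)
      _ = m ^ (p + 2) * (2 ^ (p + 1) * L ^ (2 * p + 2)) := by
          rw [show 2 * p + 2 = (p + 2) + p by ring, pow_add]; ring
  refine hreal.trans (le_of_eq ?_)
  push_cast
  field_simp
  rw [one_div, inv_pow, show L ^ (p + 2) = L * L ^ (p + 1) by ring, mul_assoc, mul_assoc,
    mul_inv_cancel₀ (pow_ne_zero _ hL0)]; ring
end
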